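/- arXiv:1512.08776 — 5 statements merged into one kernel-verified Lean document; each statement's English description precedes it below -/
import Mathlib

section
/- If A = [[A₁₁, A₁₂],[A₂₁, A₂₂]] is a symmetric positive definite n×n matrix with diagonal blocks A₁₁ (size n₁) and A₂₂ (size n₂), then 0 ≤ A₁₁^{−1/2} A₁₂ A₂₂^{−1} A₂₁ A₁₁^{−1/2} ≤ I_{n₁} in the positive semidefinite (Loewner) order. -/
open Matrix

section PosSemidefSqrt

open scoped ComplexOrder

/-- The square root of a positive semidefinite matrix, as `Matrix.PosSemidef.sqrt` was defined in
the older Mathlib (it has since been removed). -/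
noncomputable def Matrix.PosSemidef.sqrt {n : Type*} [Fintype n] [DecidableEq n] {𝕜 : Type*}
    [RCLike 𝕜] {A : Matrix n n 𝕜} (hA : A.PosSemidef) : Matrix n n 𝕜 :=
  (hA.1.eigenvectorUnitary : Matrix n n 𝕜) * diagonal ((↑) ∘ (Real.sqrt ·) ∘ hA.1.eigenvalues) *
    (star hA.1.eigenvectorUnitary : Matrix n n 𝕜)

end PosSemidefSqrt

/-!
With `S = A₁₁^{1/2}`, the matrix `1 - S⁻¹ A₁₂ A₂₂⁻¹ A₁₂ᵀ S⁻¹` is the congruence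
`S⁻¹ (A₁₁ - A₁₂ A₂₂⁻¹ A₁₂ᵀ) S⁻¹` of the Schur complement of `A₂₂`, which is positive semidefinite
because the block matrix is; the lower bound is the congruence of `A₂₂⁻¹ ≥ 0` by `S⁻¹ A₁₂`.
The eigenvector-based square root agrees with `CFC.sqrt`, which supplies `S * S = A₁₁`, `Sᴴ = S`
and the invertibility of `S`.
-/

open scoped MatrixOrder ComplexOrder

namespace Matrix

theorem PosSemidef.sqrt_eq_cfcSqrt {n 𝕜 : Type*} [Fintype n] [DecidableEq n] [RCLike 𝕜]
    {A : Matrix n n 𝕜} (hA : A.PosSemidef) : hA.sqrt = CFC.sqrt A := by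
  rw [CFC.sqrt_eq_cfc, cfc_nnreal_eq_real _ A, hA.1.cfc_eq, IsHermitian.cfc,
    Unitary.conjStarAlgAut_apply, PosSemidef.sqrt]
  congr! with x
  rcases le_total x 0 with hx | hx <;> simp [hx, Real.sqrt_eq_zero_of_nonpos]

section

variable {m n 𝕜 : Type*} [RCLike 𝕜] {A : Matrix m m 𝕜} {B : Matrix m n 𝕜} {C : Matrix n m 𝕜}
  {D : Matrix n n 𝕜}

theorem PosDef.of_fromBlocks₁₁ (h : (fromBlocks A B C D).PosDef) : A.PosDef :=
  h.submatrix Sum.inl_injective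

theorem PosDef.of_fromBlocks₂₂ (h : (fromBlocks A B C D).PosDef) : D.PosDef :=
  h.submatrix Sum.inr_injective

variable [Fintype m] [Fintype n] [DecidableEq m] [DecidableEq n]

theorem PosSemidef.inv_sqrt_mul_inv_mul_conjTranspose_mul_inv_sqrt (hD : D.PosSemidef)
    (A : Matrix m m 𝕜) (B : Matrix m n 𝕜) :
    ((CFC.sqrt A)⁻¹ * B * D⁻¹ * Bᴴ * (CFC.sqrt A)⁻¹).PosSemidef := by
  have hS : (CFC.sqrt A)⁻¹ᴴ = (CFC.sqrt A)⁻¹ := (CFC.sqrt_nonneg A).posSemidef.1.inv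
  simpa [hS, Matrix.mul_assoc] using hD.inv.mul_mul_conjTranspose_same ((CFC.sqrt A)⁻¹ * B)

theorem PosDef.one_sub_inv_sqrt_mul_inv_mul_conjTranspose_mul_inv_sqrt
    (h : (fromBlocks A B Bᴴ D).PosDef) :
    (1 - (CFC.sqrt A)⁻¹ * B * D⁻¹ * Bᴴ * (CFC.sqrt A)⁻¹).PosSemidef := by
  have hA := h.of_fromBlocks₁₁
  have hD := h.of_fromBlocks₂₂
  have := hD.isUnit.invertible
  have hSchur : (A - B * D⁻¹ * Bᴴ).PosSemidef := (PosDef.fromBlocks₂₂ A B hD).mp h.posSemidef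
  set S := CFC.sqrt A
  have hSH : S⁻¹ᴴ = S⁻¹ := (CFC.sqrt_nonneg A).posSemidef.1.inv
  have hSdet : IsUnit S.det := (isUnit_iff_isUnit_det S).mp <|
    CFC.isUnit_sqrt_iff_isStrictlyPositive.mpr (isStrictlyPositive_iff_posDef.mpr hA)
  have hSS : S * S = A := CFC.sqrt_mul_sqrt_self A hA.posSemidef.nonneg
  have hSAS : S⁻¹ * A * S⁻¹ = 1 := by
    rw [← hSS, nonsing_inv_mul_cancel_left (h := hSdet), mul_nonsing_inv _ hSdet]
  convert hSchur.mul_mul_conjTranspose_same S⁻¹ using 1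
  rw [hSH, Matrix.mul_sub, Matrix.sub_mul, hSAS]
  simp only [Matrix.mul_assoc]

end

end Matrix

/-- If `A = [[A₁₁, A₁₂],[A₁₂ᵀ, A₂₂]]` is symmetric positive definite, then
`0 ≤ A₁₁^{-1/2} A₁₂ A₂₂⁻¹ A₁₂ᵀ A₁₁^{-1/2} ≤ I` in the Loewner order. -/
theorem stmt_7 {n₁ n₂ : ℕ}
    (A₁₁ : Matrix (Fin n₁) (Fin n₁) ℝ) (A₁₂ : Matrix (Fin n₁) (Fin n₂) ℝ)
    (A₂₂ : Matrix (Fin n₂) (Fin n₂) ℝ)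
    (hA : (Matrix.fromBlocks A₁₁ A₁₂ A₁₂ᵀ A₂₂).PosDef)
    (h₁₁ : A₁₁.PosDef) :
    (h₁₁.posSemidef.sqrt⁻¹ * A₁₂ * A₂₂⁻¹ * A₁₂ᵀ * h₁₁.posSemidef.sqrt⁻¹).PosSemidef ∧
    ((1 : Matrix (Fin n₁) (Fin n₁) ℝ) -
      h₁₁.posSemidef.sqrt⁻¹ * A₁₂ * A₂₂⁻¹ * A₁₂ᵀ * h₁₁.posSemidef.sqrt⁻¹).PosSemidef := by
  rw [← conjTranspose_eq_transpose_of_trivial] at hA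
  rw [← conjTranspose_eq_transpose_of_trivial, h₁₁.posSemidef.sqrt_eq_cfcSqrt]
  exact ⟨hA.of_fromBlocks₂₂.posSemidef.inv_sqrt_mul_inv_mul_conjTranspose_mul_inv_sqrt A₁₁ A₁₂,
    hA.one_sub_inv_sqrt_mul_inv_mul_conjTranspose_mul_inv_sqrt⟩
end

section
/- Let C(τ) = [[C₁₁, τC₁₂],[τC₂₁, C₂₂]] where C = [[C₁₁,C₁₂],[C₂₁,C₂₂]] is symmetric positive definite. Then for every nonempty J ⊆ [n] and τ ∈ [0,1], the map τ ↦ det(C(τ)_J) is nonincreasing; equivalently −(∂/∂τ) det(C(τ)_J) ≥ 0. -/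
/-!
Reorder the indices of `C(τ)_J` so that those in the first block come first; `C(τ)_J` is then
`[[A, τB], [τBᴴ, D]]` with `[[A, B], [Bᴴ, D]] = C_J` positive definite. By the Schur complement,
`det C(τ)_J = det A · det (D - τ² S)` with `S = Bᴴ A⁻¹ B ≥ 0`, and `D - S ≥ 0`. As `τ` grows in
`[0, 1]`, `D - τ² S` decreases in the Loewner order while staying positive semidefinite, and the
determinant is monotone in the Loewner order on positive semidefinite matrices.
-/

namespace Matrix

variable {n : Type*} [Fintype n] [DecidableEq n]

theorem PosSemidef.one_le_det_one_add {Q : Matrix n n ℝ} (hQ : Q.PosSemidef) :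
    1 ≤ (1 + Q).det := by
  have hQ' : IsSelfAdjoint Q := hQ.1
  have h : (1 + Q : Matrix n n ℝ) = cfc (fun x : ℝ => 1 + x) Q := by
    rw [cfc_add .., cfc_const_one .., cfc_id' ..]
  rw [h, hQ.1.cfc_eq]
  simp only [IsHermitian.cfc, RCLike.ofReal_real_eq_id, CompTriple.comp_eq, det_map, det_diagonal,
    Function.comp_apply]
  exact Finset.one_le_prod fun i _ => le_add_of_nonneg_right (hQ.eigenvalues_nonneg i)

open scoped MatrixOrder in
theorem PosSemidef.det_le_det_add {X P : Matrix n n ℝ} (hX : X.PosSemidef) (hP : P.PosSemidef) :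
    X.det ≤ (X + P).det := by
  by_cases hXdef : X.PosDef
  · obtain ⟨B, rfl⟩ := CStarAlgebra.nonneg_iff_eq_star_mul_self.mp hP.nonneg
    rw [star_eq_conjTranspose, det_add_mul _ _ ((isUnit_iff_isUnit_det _).mp hXdef.isUnit)]
    exact le_mul_of_one_le_right hXdef.det_pos.le
      (hXdef.posSemidef.inv.mul_mul_conjTranspose_same B).one_le_det_one_add
  · rw [hX.posDef_iff_det_ne_zero, not_not] at hXdef
    exact hXdef ▸ (hX.add hP).det_nonneg

theorem det_fromBlocks_smul_smul₁₁ {m α : Type*} [Fintype m] [DecidableEq m] [CommRing α]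
    (A : Matrix m m α) (B : Matrix m n α) (C : Matrix n m α) (D : Matrix n n α) [Invertible A]
    (τ : α) :
    (fromBlocks A (τ • B) (τ • C) D).det = A.det * (D - τ ^ 2 • (C * ⅟A * B)).det := by
  rw [det_fromBlocks₁₁, Matrix.smul_mul, Matrix.smul_mul, Matrix.mul_smul, smul_smul, sq]

theorem antitoneOn_det_fromBlocks_smul_smul {m : Type*} [Fintype m] [DecidableEq m]
    {A : Matrix m m ℝ} {B : Matrix m n ℝ} {D : Matrix n n ℝ}
    (h : (fromBlocks A B Bᴴ D).PosDef) :
    AntitoneOn (fun τ : ℝ => (fromBlocks A (τ • B) (τ • Bᴴ) D).det) (Set.Icc 0 1) := by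
  have hA : A.PosDef := h.submatrix Sum.inl_injective
  let := hA.isUnit.invertible
  set S := Bᴴ * A⁻¹ * B
  have hS : S.PosSemidef := hA.posSemidef.inv.conjTranspose_mul_mul_same B
  have hSchur : (D - S).PosSemidef := (PosDef.fromBlocks₁₁ B D hA).mp h.posSemidef
  rintro s ⟨hs₀, -⟩ t ⟨-, ht₁⟩ hst
  simp only [det_fromBlocks_smul_smul₁₁, invOf_eq_nonsing_inv]
  have hDt : (D - t ^ 2 • S).PosSemidef := by
    have : D - t ^ 2 • S = (D - S) + (1 - t ^ 2) • S := by module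
    exact this ▸ hSchur.add (hS.smul (by nlinarith))
  have hDs : D - s ^ 2 • S = (D - t ^ 2 • S) + (t ^ 2 - s ^ 2) • S := by module
  rw [hDs]
  exact mul_le_mul_of_nonneg_left (hDt.det_le_det_add (hS.smul (by nlinarith))) hA.det_pos.le

section scaleOffDiagBlocks

variable {ι α : Type*}

/-- With `p` the indicator of the first block, this is the paper's `C(τ)`. -/
def scaleOffDiagBlocks [Mul α] (p : ι → Prop) [DecidablePred p] (τ : α) (M : Matrix ι ι α) :
    Matrix ι ι α :=
  of fun i j => if (p i ↔ p j) then M i j else τ * M i j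

@[simp]
theorem scaleOffDiagBlocks_one [MulOneClass α] (p : ι → Prop) [DecidablePred p]
    (M : Matrix ι ι α) : scaleOffDiagBlocks p 1 M = M := by
  ext i j
  simp [scaleOffDiagBlocks]

theorem scaleOffDiagBlocks_submatrix [Mul α] {κ : Type*} (p : ι → Prop) [DecidablePred p] (τ : α)
    (M : Matrix ι ι α) (f : κ → ι) :
    (scaleOffDiagBlocks p τ M).submatrix f f = scaleOffDiagBlocks (p ∘ f) τ (M.submatrix f f) :=
  rfl

theorem fromBlocks_smul_smul_eq_scaleOffDiagBlocks [Mul α] {m n : Type*}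
    (A : Matrix m m α) (B : Matrix m n α) (C : Matrix n m α) (D : Matrix n n α) (τ : α) :
    fromBlocks A (τ • B) (τ • C) D =
      scaleOffDiagBlocks (fun i => i.isLeft) τ (fromBlocks A B C D) := by
  ext (i | i) (j | j) <;> simp [scaleOffDiagBlocks]

theorem scaleOffDiagBlocks_submatrix_sumCompl [Mul α] (p : ι → Prop) [DecidablePred p] (τ : α)
    (M : Matrix ι ι α) :
    (scaleOffDiagBlocks p τ M).submatrix (Equiv.sumCompl p) (Equiv.sumCompl p) =
      fromBlocks (toBlock M p p) (τ • toBlock M p (¬p ·)) (τ • toBlock M (¬p ·) p)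
        (toBlock M (¬p ·) (¬p ·)) := by
  ext (⟨i, hi⟩ | ⟨i, hi⟩) (⟨j, hj⟩ | ⟨j, hj⟩) <;> simp [scaleOffDiagBlocks, hi, hj]

end scaleOffDiagBlocks

theorem IsHermitian.toBlock_compl {ι α : Type*} [Star α] {M : Matrix ι ι α} (hM : M.IsHermitian)
    (p : ι → Prop) : toBlock M (¬p ·) p = (toBlock M p (¬p ·))ᴴ := by
  ext i j
  simp [toBlock_apply, hM.apply]

theorem PosDef.antitoneOn_det_scaleOffDiagBlocks {ι : Type*} [Fintype ι] [DecidableEq ι]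
    {M : Matrix ι ι ℝ} (hM : M.PosDef) (p : ι → Prop) [DecidablePred p] :
    AntitoneOn (fun τ : ℝ => (scaleOffDiagBlocks p τ M).det) (Set.Icc 0 1) := by
  have hblocks (τ : ℝ) := scaleOffDiagBlocks_submatrix_sumCompl p τ M
  simp only [hM.1.toBlock_compl] at hblocks
  have hdet (τ : ℝ) := congrArg det (hblocks τ)
  simp only [det_submatrix_equiv_self] at hdet
  have hpd := hM.submatrix (Equiv.sumCompl p).injective
  rw [← scaleOffDiagBlocks_one p M, hblocks, one_smul, one_smul] at hpd
  simpa only [hdet] using antitoneOn_det_fromBlocks_smul_smul hpd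

end Matrix

theorem stmt_10_general {n₁ n₂ : ℕ}
    (C₁₁ : Matrix (Fin n₁) (Fin n₁) ℝ) (C₁₂ : Matrix (Fin n₁) (Fin n₂) ℝ)
    (C₂₁ : Matrix (Fin n₂) (Fin n₁) ℝ) (C₂₂ : Matrix (Fin n₂) (Fin n₂) ℝ)
    (hC : (Matrix.fromBlocks C₁₁ C₁₂ C₂₁ C₂₂).PosDef)
    (J : Finset (Fin n₁ ⊕ Fin n₂)) :
    AntitoneOn (fun τ : ℝ =>
        ((Matrix.fromBlocks C₁₁ (τ • C₁₂) (τ • C₂₁) C₂₂).submatrix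
          (Subtype.val : J → Fin n₁ ⊕ Fin n₂) (Subtype.val : J → Fin n₁ ⊕ Fin n₂)).det)
      (Set.Icc (0 : ℝ) 1) := by
  simp only [Matrix.fromBlocks_smul_smul_eq_scaleOffDiagBlocks, Matrix.scaleOffDiagBlocks_submatrix]
  exact (hC.submatrix Subtype.val_injective).antitoneOn_det_scaleOffDiagBlocks _

/-- For `C = [[C₁₁, C₁₂],[C₂₁, C₂₂]]` symmetric positive definite and
`C(τ) = [[C₁₁, τC₁₂],[τC₂₁, C₂₂]]`, the map `τ ↦ det(C(τ)_J)` is nonincreasing on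
`[0,1]` for every nonempty index set `J`. -/
theorem stmt_10 {n₁ n₂ : ℕ}
    (C₁₁ : Matrix (Fin n₁) (Fin n₁) ℝ) (C₁₂ : Matrix (Fin n₁) (Fin n₂) ℝ)
    (C₂₁ : Matrix (Fin n₂) (Fin n₁) ℝ) (C₂₂ : Matrix (Fin n₂) (Fin n₂) ℝ)
    (hC : (Matrix.fromBlocks C₁₁ C₁₂ C₂₁ C₂₂).PosDef)
    (hsymm : (Matrix.fromBlocks C₁₁ C₁₂ C₂₁ C₂₂).IsSymm)
    (J : Finset (Fin n₁ ⊕ Fin n₂)) (hJ : J.Nonempty) :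
    AntitoneOn (fun τ : ℝ =>
        ((Matrix.fromBlocks C₁₁ (τ • C₁₂) (τ • C₂₁) C₂₂).submatrix
          (Subtype.val : J → Fin n₁ ⊕ Fin n₂) (Subtype.val : J → Fin n₁ ⊕ Fin n₂)).det)
      (Set.Icc (0 : ℝ) 1) :=
  stmt_10_general C₁₁ C₁₂ C₂₁ C₂₂ hC J
end

section
/- For α > 0, λ ≥ 0, y ≥ 0 and μ > 0, ∫₀^∞ (1/μ) e^{−λx} g_α(x/μ, y) dx = (1 + μλ)^{−α} exp(−μλ y/(1+μλ)), where g_α(x,y) = e^{−x−y} Σ_{k≥0} x^{k+α−1} y^k / (Γ(k+α) k!). -/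
/-!
Expanding `g_α` and the exponential factor gives, for every `k`, the term
`e^{-y} y^k / k!` times the Gamma density `t^{k+α-1} e^{-(1+λ)t} / Γ(k+α)` up to the factor
`(1+λ)^{-(k+α)}`. Since the coefficients are absolutely summable, integration and summation
commute, and the resulting series is `(1+λ)^{-α} e^{-y} e^{y/(1+λ)}`. The substitution
`x = μ t` reduces the general case to `μ = 1`.
-/

open MeasureTheory

/-- The noncentral gamma-type kernel
`g_α(x,y) = e^{-x-y} ∑_{k≥0} x^{k+α-1} y^k / (Γ(k+α) k!)`. -/
noncomputable def royenG (α x y : ℝ) : ℝ :=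
  Real.exp (-x - y) *
    ∑' k : ℕ, x ^ ((k : ℝ) + α - 1) * y ^ k / (Real.Gamma ((k : ℝ) + α) * (Nat.factorial k))

open Real Set

lemma integrableOn_rpow_mul_exp_neg_mul {s r : ℝ} (hs : 0 < s) (hr : 0 < r) :
    IntegrableOn (fun t : ℝ ↦ t ^ (s - 1) * exp (-(r * t))) (Ioi 0) := by
  simpa only [rpow_one, neg_mul] using
    integrableOn_rpow_mul_exp_neg_mul_rpow (p := 1) (by linarith : -1 < s - 1) one_pos hr

lemma integral_rpow_mul_exp_neg_mul_div_Gamma {s r : ℝ} (hs : 0 < s) (hr : 0 < r) :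
    ∫ t in Ioi 0, t ^ (s - 1) * exp (-(r * t)) / Gamma s = r ^ (-s) := by
  rw [integral_div, integral_rpow_mul_exp_neg_mul_Ioi hs hr,
    mul_div_cancel_right₀ _ (Gamma_pos_of_pos hs).ne', one_div, inv_rpow hr.le, rpow_neg hr.le]

lemma hasSum_integral_tsum_rpow_mul_exp_neg_mul {ι : Type*} [Countable ι] {c s : ι → ℝ} {r : ℝ}
    (hs : ∀ i, 0 < s i) (hr : 0 < r) (hsum : Summable fun i ↦ c i * r ^ (-s i)) :
    HasSum (fun i ↦ c i * r ^ (-s i))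
      (∫ t in Ioi 0, ∑' i, c i * (t ^ (s i - 1) * exp (-(r * t)) / Gamma (s i))) := by
  have hint i : Integrable (fun t ↦ c i * (t ^ (s i - 1) * exp (-(r * t)) / Gamma (s i)))
      (volume.restrict (Ioi 0)) :=
    ((integrableOn_rpow_mul_exp_neg_mul (hs i) hr).div_const _).const_mul _
  have hnorm i : ∫ t in Ioi 0, ‖c i * (t ^ (s i - 1) * exp (-(r * t)) / Gamma (s i))‖ =
      |c i * r ^ (-s i)| := by
    rw [abs_mul, abs_of_pos (rpow_pos_of_pos hr _),
      ← integral_rpow_mul_exp_neg_mul_div_Gamma (hs i) hr, ← integral_const_mul]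
    refine setIntegral_congr_fun measurableSet_Ioi fun t (ht : 0 < t) ↦ ?_
    have := Gamma_pos_of_pos (hs i)
    rw [norm_mul, Real.norm_eq_abs, Real.norm_of_nonneg (by positivity)]
  simpa only [integral_const_mul, integral_rpow_mul_exp_neg_mul_div_Gamma (hs _) hr] using
    hasSum_integral_of_summable_integral_norm hint (by simpa only [hnorm] using hsum.abs)

lemma exp_neg_mul_mul_royenG (α l t y : ℝ) :
    exp (-(l * t)) * royenG α t y = ∑' k : ℕ, exp (-y) * y ^ k / k.factorial *
      (t ^ ((k : ℝ) + α - 1) * exp (-((1 + l) * t)) / Gamma ((k : ℝ) + α)) := by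
  have hexp : exp (-(l * t)) * exp (-t - y) = exp (-y) * exp (-((1 + l) * t)) := by
    rw [← exp_add, ← exp_add]
    ring_nf
  rw [royenG, ← tsum_mul_left, ← tsum_mul_left]
  refine tsum_congr fun k ↦ ?_
  linear_combination t ^ ((k : ℝ) + α - 1) * y ^ k / (Gamma ((k : ℝ) + α) * k.factorial) * hexp

lemma integral_exp_neg_mul_royenG {α l : ℝ} (hα : 0 < α) (hl : 0 < 1 + l) (y : ℝ) :
    ∫ t in Ioi 0, exp (-(l * t)) * royenG α t y = (1 + l) ^ (-α) * exp (-(l * y) / (1 + l)) := by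
  have hterm (k : ℕ) : exp (-y) * y ^ k / k.factorial * (1 + l) ^ (-((k : ℝ) + α)) =
      (1 + l) ^ (-α) * exp (-y) * ((y / (1 + l)) ^ k / k.factorial) := by
    rw [neg_add, rpow_add hl, rpow_neg hl.le (k : ℝ), rpow_natCast, div_pow]
    ring
  have hsum : HasSum (fun k : ℕ ↦ exp (-y) * y ^ k / k.factorial * (1 + l) ^ (-((k : ℝ) + α)))
      ((1 + l) ^ (-α) * exp (-(l * y) / (1 + l))) := by
    have := (NormedSpace.expSeries_div_hasSum_exp (y / (1 + l))).mul_left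
      ((1 + l) ^ (-α) * exp (-y))
    rw [← exp_eq_exp_ℝ, mul_assoc, ← exp_add] at this
    rw [show -(l * y) / (1 + l) = -y + y / (1 + l) by field_simp; ring]
    simpa only [hterm] using this
  simp_rw [exp_neg_mul_mul_royenG]
  exact (hasSum_integral_tsum_rpow_mul_exp_neg_mul (fun k ↦ by positivity) hl hsum.summable).unique
    hsum

theorem stmt_12_general (α l y μ : ℝ) (hα : 0 < α) (hl : 0 ≤ l) (hμ : 0 < μ) :
    ∫ x in Set.Ioi (0 : ℝ), (1 / μ) * Real.exp (-l * x) * royenG α (x / μ) y =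
      (1 + μ * l) ^ (-α) * Real.exp (-(μ * l * y) / (1 + μ * l)) := by
  calc ∫ x in Ioi 0, (1 / μ) * exp (-l * x) * royenG α (x / μ) y
      = μ⁻¹ * ∫ x in Ioi 0, exp (-(μ * l * (x * μ⁻¹))) * royenG α (x * μ⁻¹) y := by
        rw [← integral_const_mul]
        refine setIntegral_congr_fun measurableSet_Ioi fun x _ ↦ ?_
        rw [← div_eq_mul_inv, show μ * l * (x / μ) = l * x by field_simp, neg_mul, one_div,
          mul_assoc]
    _ = ∫ t in Ioi 0, exp (-(μ * l * t)) * royenG α t y := by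
        rw [integral_comp_mul_right_Ioi (fun t ↦ exp (-(μ * l * t)) * royenG α t y) 0
          (inv_pos.2 hμ), zero_mul, inv_inv, smul_eq_mul, inv_mul_cancel_left₀ hμ.ne']
    _ = _ := integral_exp_neg_mul_royenG hα (by positivity) y

/-- Laplace transform of the kernel `g_α`. -/
theorem stmt_12 (α l y μ : ℝ) (hα : 0 < α) (hl : 0 ≤ l) (hy : 0 ≤ y) (hμ : 0 < μ) :
    ∫ x in Set.Ioi (0 : ℝ), (1 / μ) * Real.exp (-l * x) * royenG α (x / μ) y =
      (1 + μ * l) ^ (-α) * Real.exp (-(μ * l * y) / (1 + μ * l)) :=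
  stmt_12_general α l y μ hα hl hμ
end

section
/- For all α > 0, x > 0, y ≥ 0, the bound g_α(x, y) ≤ 2 x^{α−1}(e^{−x} + x) holds, where g_α(x,y) = e^{−x−y} Σ_{k≥0} x^{k+α−1} y^k/(Γ(k+α) k!). -/
lemma exp_eq_tsum_real (x : ℝ) : Real.exp x = ∑' n : ℕ, x ^ n / (n.factorial : ℝ) := by
  rw [Real.exp_eq_exp_ℝ, NormedSpace.exp_eq_tsum_div]

lemma pow_div_factorial_le_exp {y : ℝ} (hy : 0 ≤ y) (n : ℕ) :
    y ^ n / (n.factorial : ℝ) ≤ Real.exp y := by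
  rw [exp_eq_tsum_real]
  exact Summable.le_tsum (Real.summable_pow_div_factorial y) n (fun m _ => by positivity)

lemma one_le_Gamma_of_two_le {s : ℝ} (hs : 2 ≤ s) : 1 ≤ Real.Gamma s := by
  have := Real.Gamma_strictMonoOn_Ici.monotoneOn (Set.self_mem_Ici) (Set.mem_Ici.mpr hs) hs
  rwa [Real.Gamma_two] at this

lemma half_le_Gamma_of_one_le {s : ℝ} (hs : 1 ≤ s) : 1/2 ≤ Real.Gamma s := by
  rcases le_or_gt 2 s with h2 | h2
  · linarith [one_le_Gamma_of_two_le h2]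
  · have hrec := Real.Gamma_add_one (by linarith : s ≠ 0)
    have h := one_le_Gamma_of_two_le (by linarith : 2 ≤ s + 1)
    have hpos := Real.Gamma_pos_of_pos (by linarith : (0:ℝ) < s)
    nlinarith

lemma half_le_Gamma {s : ℝ} (hs : 0 < s) : 1/2 ≤ Real.Gamma s := by
  rcases le_or_gt 1 s with h1 | h1
  · exact half_le_Gamma_of_one_le h1
  · have hrec := Real.Gamma_add_one hs.ne'
    have h := half_le_Gamma_of_one_le (by linarith : 1 ≤ s + 1)
    have hpos := Real.Gamma_pos_of_pos hs
    nlinarith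

lemma half_fact_le_Gamma (α : ℝ) (hα : 0 < α) (k : ℕ) :
    1/2 * (k.factorial : ℝ) ≤ Real.Gamma ((k : ℝ) + 1 + α) := by
  induction k with
  | zero => simpa using half_le_Gamma (by linarith : (0:ℝ) < 1 + α)
  | succ n ih =>
    have hpos0 : (0:ℝ) < (n:ℝ) + 1 + α := by positivity
    have hrec : Real.Gamma ((n:ℝ) + 1 + α + 1) = ((n:ℝ) + 1 + α) * Real.Gamma ((n:ℝ) + 1 + α) :=
      Real.Gamma_add_one hpos0.ne'
    have hcast : ((n + 1 : ℕ) : ℝ) + 1 + α = (n:ℝ) + 1 + α + 1 := by push_cast; ring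
    rw [hcast, hrec]
    have hpos : (0:ℝ) < Real.Gamma ((n:ℝ) + 1 + α) := Real.Gamma_pos_of_pos hpos0
    calc 1/2 * ((n+1).factorial : ℝ) = ((n:ℝ) + 1) * (1/2 * (n.factorial : ℝ)) := by
          push_cast [Nat.factorial_succ]; ring
      _ ≤ ((n:ℝ) + 1) * Real.Gamma ((n:ℝ) + 1 + α) :=
          mul_le_mul_of_nonneg_left ih (by positivity)
      _ ≤ ((n:ℝ) + 1 + α) * Real.Gamma ((n:ℝ) + 1 + α) := by nlinarith

/-- Majorant sequence for the terms of `royenG`. -/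
noncomputable def royenMaj (α x y : ℝ) : ℕ → ℝ
  | 0 => 2 * x ^ (α - 1) * Real.exp y
  | (k+1) => 2 * x ^ (α - 1) * Real.exp y * x * (x ^ k / (k.factorial : ℝ))

lemma royenMaj_summable (α x y : ℝ) : Summable (royenMaj α x y) := by
  apply (summable_nat_add_iff 1).mp
  have : Summable (fun k : ℕ => 2 * x ^ (α - 1) * Real.exp y * x * (x ^ k / (k.factorial : ℝ))) :=
    (Real.summable_pow_div_factorial x).mul_left _
  exact this.congr (fun k => rfl)

lemma royenMaj_tsum (α x y : ℝ) :
    ∑' k : ℕ, royenMaj α x y k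
      = 2 * x ^ (α - 1) * Real.exp y * (1 + x * Real.exp x) := by
  rw [Summable.tsum_eq_zero_add (royenMaj_summable α x y)]
  have h1 : ∑' k : ℕ, royenMaj α x y (k + 1)
      = 2 * x ^ (α - 1) * Real.exp y * x * Real.exp x := by
    have : ∑' k : ℕ, royenMaj α x y (k + 1)
        = ∑' k : ℕ, 2 * x ^ (α - 1) * Real.exp y * x * (x ^ k / (k.factorial : ℝ)) := rfl
    rw [this, tsum_mul_left, ← exp_eq_tsum_real]
  rw [h1]
  show 2 * x ^ (α - 1) * Real.exp y + _ = _
  ring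

lemma royen_term_le (α x y : ℝ) (hα : 0 < α) (hx : 0 < x) (hy : 0 ≤ y) (k : ℕ) :
    x ^ ((k : ℝ) + α - 1) * y ^ k / (Real.Gamma ((k : ℝ) + α) * (Nat.factorial k))
      ≤ royenMaj α x y k := by
  have hxp : (0:ℝ) < x ^ (α - 1) := Real.rpow_pos_of_pos hx _
  have hey : 1 ≤ Real.exp y := Real.one_le_exp hy
  cases k with
  | zero =>
    have hΓ : 1/2 ≤ Real.Gamma α := half_le_Gamma hα
    have hΓpos : 0 < Real.Gamma α := Real.Gamma_pos_of_pos hα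
    show x ^ ((0:ℕ) + α - 1) * y ^ 0 / (Real.Gamma ((0:ℕ) + α) * (Nat.factorial 0))
        ≤ 2 * x ^ (α - 1) * Real.exp y
    push_cast
    simp only [pow_zero, Nat.factorial_zero, Nat.cast_one, mul_one, zero_add]
    calc x ^ (α - 1) / Real.Gamma α ≤ x ^ (α - 1) / (1/2) := by
          apply div_le_div_of_nonneg_left hxp.le (by norm_num) hΓ
      _ = 2 * x ^ (α - 1) * 1 := by ring
      _ ≤ 2 * x ^ (α - 1) * Real.exp y := by nlinarith
  | succ n =>
    have hΓ : 1/2 * (n.factorial : ℝ) ≤ Real.Gamma ((n:ℝ) + 1 + α) :=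
      half_fact_le_Gamma α hα n
    have hΓpos : 0 < Real.Gamma ((n:ℝ) + 1 + α) := Real.Gamma_pos_of_pos (by positivity)
    have hcast : ((n + 1 : ℕ) : ℝ) + α = (n:ℝ) + 1 + α := by push_cast; ring
    have hrpow : x ^ (((n + 1 : ℕ) : ℝ) + α - 1) = x ^ (α - 1) * x ^ (n + 1) := by
      rw [show ((n + 1 : ℕ) : ℝ) + α - 1 = (α - 1) + ((n + 1 : ℕ) : ℝ) by push_cast; ring,
        Real.rpow_add hx, Real.rpow_natCast]
    show x ^ (((n + 1 : ℕ) : ℝ) + α - 1) * y ^ (n + 1)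
        / (Real.Gamma (((n + 1 : ℕ) : ℝ) + α) * ((n+1).factorial : ℝ))
        ≤ 2 * x ^ (α - 1) * Real.exp y * x * (x ^ n / (n.factorial : ℝ))
    rw [hrpow, hcast]
    have hnum : 0 ≤ x ^ (α - 1) * x ^ (n + 1) * y ^ (n + 1) := by positivity
    have hfac : (0:ℝ) < (n.factorial : ℝ) := by positivity
    have hfac1 : (0:ℝ) < ((n+1).factorial : ℝ) := by positivity
    calc x ^ (α - 1) * x ^ (n + 1) * y ^ (n + 1)
          / (Real.Gamma ((n:ℝ) + 1 + α) * ((n+1).factorial : ℝ))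
        ≤ x ^ (α - 1) * x ^ (n + 1) * y ^ (n + 1)
          / ((1/2 * (n.factorial : ℝ)) * ((n+1).factorial : ℝ)) := by
          apply div_le_div_of_nonneg_left hnum (by positivity)
          exact mul_le_mul_of_nonneg_right hΓ hfac1.le
      _ = (2 * x ^ (α - 1) * x * (x ^ n / (n.factorial : ℝ)))
            * (y ^ (n + 1) / ((n+1).factorial : ℝ)) := by
          field_simp
          ring
      _ ≤ (2 * x ^ (α - 1) * x * (x ^ n / (n.factorial : ℝ))) * Real.exp y := by
          apply mul_le_mul_of_nonneg_left (pow_div_factorial_le_exp hy (n+1))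
          positivity
      _ = 2 * x ^ (α - 1) * Real.exp y * x * (x ^ n / (n.factorial : ℝ)) := by ring

/-- The pointwise bound `g_α(x, y) ≤ 2 x^{α-1} (e^{-x} + x)`. -/
theorem stmt_14 (α x y : ℝ) (hα : 0 < α) (hx : 0 < x) (hy : 0 ≤ y) :
    royenG α x y ≤ 2 * x ^ (α - 1) * (Real.exp (-x) + x) := by
  have hterm := royen_term_le α x y hα hx hy
  have hnonneg : ∀ k : ℕ,
      0 ≤ x ^ ((k : ℝ) + α - 1) * y ^ k / (Real.Gamma ((k : ℝ) + α) * (Nat.factorial k)) := by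
    intro k
    have hΓpos : 0 < Real.Gamma ((k:ℝ) + α) := Real.Gamma_pos_of_pos (by positivity)
    have hxp : (0:ℝ) ≤ x ^ ((k : ℝ) + α - 1) := (Real.rpow_pos_of_pos hx _).le
    have : (0:ℝ) < (k.factorial : ℝ) := by positivity
    positivity
  have hsum : Summable (fun k : ℕ =>
      x ^ ((k : ℝ) + α - 1) * y ^ k / (Real.Gamma ((k : ℝ) + α) * (Nat.factorial k))) :=
    Summable.of_nonneg_of_le hnonneg hterm (royenMaj_summable α x y)
  have hS : (∑' k : ℕ,
      x ^ ((k : ℝ) + α - 1) * y ^ k / (Real.Gamma ((k : ℝ) + α) * (Nat.factorial k)))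
      ≤ 2 * x ^ (α - 1) * Real.exp y * (1 + x * Real.exp x) := by
    rw [← royenMaj_tsum α x y]
    exact Summable.tsum_le_tsum hterm hsum (royenMaj_summable α x y)
  have hexp : 0 < Real.exp (-x - y) := Real.exp_pos _
  have hkey : royenG α x y
      ≤ Real.exp (-x - y) * (2 * x ^ (α - 1) * Real.exp y * (1 + x * Real.exp x)) := by
    unfold royenG
    exact mul_le_mul_of_nonneg_left hS hexp.le
  have heq : Real.exp (-x - y) * (2 * x ^ (α - 1) * Real.exp y * (1 + x * Real.exp x))
      = 2 * x ^ (α - 1) * (Real.exp (-x) + x) := by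
    have e1 : Real.exp (-x - y) * Real.exp y = Real.exp (-x) := by
      rw [← Real.exp_add]; ring_nf
    have e2 : Real.exp (-x) * Real.exp x = 1 := by
      rw [← Real.exp_add]; simp
    calc Real.exp (-x - y) * (2 * x ^ (α - 1) * Real.exp y * (1 + x * Real.exp x))
        = 2 * x ^ (α - 1) * ((Real.exp (-x - y) * Real.exp y)
            + x * ((Real.exp (-x - y) * Real.exp y) * Real.exp x)) := by ring
      _ = 2 * x ^ (α - 1) * (Real.exp (-x) + x * (Real.exp (-x) * Real.exp x)) := by rw [e1]
      _ = 2 * x ^ (α - 1) * (Real.exp (-x) + x) := by rw [e2]; ring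
  linarith [hkey, heq.le]
end

section
/- For α > 1, x > 0 and y ≥ 0, the partial derivative in x satisfies ∂/∂x g_α(x,y) = g_{α−1}(x,y) − g_α(x,y), where g_α(x,y) = e^{−x−y} Σ_{k≥0} x^{k+α−1} y^k/(Γ(k+α) k!). -/
open Filter Real Nat

lemma summable_pow_div_Gamma_mul_factorial {α : ℝ} (hα : 0 < α) (r : ℝ) :
    Summable fun n : ℕ => r ^ n / (Gamma (n + α) * n !) := by
  refine summable_of_ratio_norm_eventually_le (r := 1 / 2) (by norm_num) ?_
  filter_upwards [eventually_ge_atTop ⌈2 * |r|⌉₊] with n hn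
  have hnα : 0 < (n : ℝ) + α := by positivity
  have hratio : r ^ (n + 1) / (Gamma (↑(n + 1) + α) * (n + 1)!) =
      r / ((n + α) * (n + 1)) * (r ^ n / (Gamma (n + α) * n !)) := by
    rw [Nat.cast_succ, add_right_comm, Gamma_add_one hnα.ne', Nat.factorial_succ]
    have := Gamma_pos_of_pos hnα
    push_cast
    field_simp
    ring
  have hsmall : ‖r / ((n + α) * (n + 1))‖ ≤ 1 / 2 := by
    have h2r : 2 * |r| ≤ n := Nat.ceil_le.mp hn
    rw [norm_div, Real.norm_eq_abs, Real.norm_of_nonneg (by positivity),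
      div_le_iff₀ (by positivity)]
    nlinarith [abs_nonneg r]
  rw [hratio, norm_mul]
  exact mul_le_mul_of_nonneg_right hsmall (norm_nonneg _)

noncomputable def royenTerm (α y : ℝ) (k : ℕ) (t : ℝ) : ℝ :=
  t ^ ((k : ℝ) + α - 1) * y ^ k / (Gamma (k + α) * k !)

lemma royenG_eq_tsum (α x y : ℝ) :
    royenG α x y = exp (-x - y) * ∑' k, royenTerm α y k x := rfl

lemma royenTerm_eq_rpow_mul {t : ℝ} (ht : 0 < t) (α y : ℝ) (k : ℕ) :
    royenTerm α y k t = t ^ (α - 1) * ((t * y) ^ k / (Gamma (k + α) * k !)) := by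
  rw [royenTerm, show (k : ℝ) + α - 1 = α - 1 + k by ring, rpow_add ht, rpow_natCast, mul_pow]
  ring

lemma summable_royenTerm {α t : ℝ} (hα : 0 < α) (ht : 0 < t) (y : ℝ) :
    Summable fun k => royenTerm α y k t := by
  simp_rw [royenTerm_eq_rpow_mul ht]
  exact (summable_pow_div_Gamma_mul_factorial hα (t * y)).mul_left _

lemma norm_royenTerm_le {α t b C : ℝ} (hα : 0 < α) (ht : 0 < t) (htb : t ≤ b)
    (hC : t ^ (α - 1) ≤ C) (y : ℝ) (k : ℕ) :
    ‖royenTerm α y k t‖ ≤ C * ((b * |y|) ^ k / (Gamma (k + α) * k !)) := by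
  have hΓ := Gamma_pos_of_pos (by positivity : 0 < (k : ℝ) + α)
  rw [royenTerm_eq_rpow_mul ht, Real.norm_eq_abs, abs_mul, abs_of_pos (rpow_pos_of_pos ht _),
    abs_div, abs_of_pos (by positivity : 0 < Gamma (k + α) * k !), abs_pow, abs_mul,
    abs_of_pos ht]
  have hC0 : 0 ≤ C := (rpow_nonneg ht.le _).trans hC
  gcongr

lemma hasDerivAt_rpow_div_Gamma_add_one {s t : ℝ} (hs : s ≠ 0) (ht : t ≠ 0) :
    HasDerivAt (fun t => t ^ s / Gamma (s + 1)) (t ^ (s - 1) / Gamma s) t := by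
  refine ((hasDerivAt_rpow_const (p := s) (Or.inl ht)).div_const (Gamma (s + 1))).congr_deriv ?_
  rw [Gamma_add_one hs, mul_div_mul_left _ _ hs]

lemma hasDerivAt_royenTerm {α t : ℝ} (hα : 1 < α) (ht : t ≠ 0) (y : ℝ) (k : ℕ) :
    HasDerivAt (royenTerm α y k) (royenTerm (α - 1) y k t) t := by
  have hs : (k : ℝ) + α - 1 ≠ 0 := by linarith [k.cast_nonneg (α := ℝ)]
  have hterm : royenTerm α y k =
      fun t => t ^ ((k : ℝ) + α - 1) / Gamma (k + α - 1 + 1) * (y ^ k / k !) := by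
    ext t
    simp only [royenTerm, sub_add_cancel]
    ring
  rw [hterm]
  refine ((hasDerivAt_rpow_div_Gamma_add_one hs ht).mul_const _).congr_deriv ?_
  simp only [royenTerm]
  ring_nf

lemma hasDerivAt_tsum_royenTerm {α x : ℝ} (hα : 1 < α) (hx : 0 < x) (y : ℝ) :
    HasDerivAt (fun t => ∑' k, royenTerm α y k t) (∑' k, royenTerm (α - 1) y k x) x := by
  have hα₁ : 0 < α - 1 := by linarith
  have hxs : x ∈ Set.Ioo (x / 2) (x + 1) := ⟨by linarith, by linarith⟩
  -- the factor `t ^ (α - 2)` of the differentiated terms is bounded near `x`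
  obtain ⟨C, hC⟩ := (isCompact_Icc (a := x / 2) (b := x + 1)).exists_bound_of_continuousOn
    (f := fun t => t ^ (α - 1 - 1))
    (continuousOn_id.rpow_const fun t ht => Or.inl (by simp only [id]; linarith [ht.1]))
  refine hasDerivAt_tsum_of_isPreconnected
    ((summable_pow_div_Gamma_mul_factorial hα₁ ((x + 1) * |y|)).mul_left C)
    isOpen_Ioo isPreconnected_Ioo (fun k t ht => ?_) (fun k t ht => ?_) hxs
    (summable_royenTerm (by linarith) hx y) hxs
  · exact hasDerivAt_royenTerm hα (by linarith [ht.1]) y k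
  · exact norm_royenTerm_le hα₁ (by linarith [ht.1]) ht.2.le
      ((le_norm_self _).trans (hC t (Set.Ioo_subset_Icc_self ht))) y k

theorem stmt_16_general (α x y : ℝ) (hα : 1 < α) (hx : 0 < x) :
    HasDerivAt (fun t => royenG α t y) (royenG (α - 1) x y - royenG α x y) x := by
  have hexp : HasDerivAt (fun t => exp (-t - y)) (exp (-x - y) * -1) x :=
    ((hasDerivAt_neg x).sub_const y).exp
  simp only [royenG_eq_tsum]
  refine (hexp.mul (hasDerivAt_tsum_royenTerm hα hx y)).congr_deriv ?_
  ring

/-- For `α > 1`, `∂/∂x g_α(x,y) = g_{α-1}(x,y) - g_α(x,y)`. -/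
theorem stmt_16 (α x y : ℝ) (hα : 1 < α) (hx : 0 < x) (hy : 0 ≤ y) :
    HasDerivAt (fun t => royenG α t y) (royenG (α - 1) x y - royenG α x y) x :=
  stmt_16_general α x y hα hx
end
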